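/- For every integer k ≥ 1 there exist a constant 𝒞_k > 0, a constant C > 0, and a threshold X₀ such that for all integers X ≥ X₀ and 1 ≤ H ≤ X: (1/X) · ∑_{x=1}^{X} ∑_{y = x+1}^{x+H} τ_{2k}(y)^{2k} · τ₂(y)·τ_k(y)² · (1 + X / rad_k(y)) ≤ C · H · (log X)^{𝒞_k}, where log denotes the natural logarithm. -/

import Mathlib

/-!
Put `M = (2k)^(2k)·2·k²`. Two factorizations of `n` have a common refinement (a matrix whose
row and column products are the two factorizations), so `τ_a τ_b ≤ τ_(ab)` and the weight is at
most `τ_M(y)`. Each `y ≤ 2X` lies in at most `H` of the windows `(x, x + H]`, which leaves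
`(H / X) ∑_{y ≤ 2X} τ_M(y) (1 + X / rad_k(y))` to bound. Expanding the product of `M` harmonic
sums gives `∑_{n ≤ N} τ_M(n) / n ≤ (1 + log N)^M`. For the `rad_k` term, group `n` by
`r = rad_k(n)`: then `r ∣ n ∣ r^k`, so `n = r m` with `m ∣ r^(k-1)`, and submultiplicativity
of `τ_M` bounds the fibre by `τ_M(r) τ_(M+1)(r)^(k-1) ≤ τ_(M(M+1)^(k-1))(r)`, to which the
harmonic bound applies again.
-/

/-- `τ_k(n)`: the number of `k`-tuples of positive integers with product `n`. -/
noncomputable def tauNat (k n : ℕ) : ℕ :=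
  Nat.card {d : Fin k → ℕ // (∀ i, 0 < d i) ∧ ∏ i, d i = n}

/-- `rad_k(n)`: the minimum of `lcm(n₁,…,n_k)` over factorizations `n = n₁⋯n_k`
into positive integers. -/
noncomputable def radk (k n : ℕ) : ℕ :=
  sInf {m : ℕ | ∃ d : Fin k → ℕ, (∀ i, 0 < d i) ∧ ∏ i, d i = n ∧ Finset.univ.lcm d = m}

open Finset

theorem Nat.exists_mul_eq_of_prod_eq_mul {n : ℕ} (f : Fin n → ℕ) {a b : ℕ}
    (hf : ∏ i, f i = a * b) (hab : a * b ≠ 0) :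
    ∃ g h : Fin n → ℕ, g * h = f ∧ ∏ i, g i = a ∧ ∏ i, h i = b := by
  induction n generalizing a b with
  | zero =>
    obtain ⟨rfl, rfl⟩ : a = 1 ∧ b = 1 := by simpa using hf.symm
    exact ⟨1, 1, funext fun i => i.elim0, by simp, by simp⟩
  | succ n ih =>
    rw [Fin.prod_univ_succ] at hf
    obtain ⟨u, v, ⟨a', rfl⟩, ⟨b', rfl⟩, hf0⟩ := Nat.dvd_mul.mp (Dvd.intro _ hf)
    have huv : u * v ≠ 0 := by
      intro h0; apply hab; rw [← hf, ← hf0, h0, zero_mul]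
    have htail : ∏ i : Fin n, f i.succ = a' * b' := by
      apply Nat.eq_of_mul_eq_mul_left (Nat.pos_of_ne_zero huv)
      rw [hf0, hf, ← hf0]; ring
    obtain ⟨g, h, hgh, hg, hh⟩ := ih _ htail (by simp_all)
    refine ⟨Fin.cons u g, Fin.cons v h, funext fun i => ?_, ?_, ?_⟩
    · refine Fin.cases ?_ (fun i => ?_) i
      · simpa using hf0
      · simpa using congrFun hgh i
    · simp [Fin.prod_univ_succ, hg]
    · simp [Fin.prod_univ_succ, hh]

theorem Nat.exists_matrix_prod_eq {a b : ℕ} (d : Fin a → ℕ) (e : Fin b → ℕ)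
    (hde : ∏ i, d i = ∏ j, e j) (hd : ∏ i, d i ≠ 0) :
    ∃ M : Fin a → Fin b → ℕ, (∀ i, ∏ j, M i j = d i) ∧ ∀ j, ∏ i, M i j = e j := by
  induction a generalizing e with
  | zero =>
    have he : ∀ j, e j = 1 := by simpa using hde.symm
    exact ⟨Fin.elim0, fun i => i.elim0, fun j => by simp [he]⟩
  | succ a ih =>
    rw [Fin.prod_univ_succ] at hde hd
    obtain ⟨g, h, hgh, hg, hh⟩ := Nat.exists_mul_eq_of_prod_eq_mul e hde.symm hd
    obtain ⟨M, hrow, hcol⟩ := ih (fun i => d i.succ) h hh.symm (right_ne_zero_of_mul hd)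
    refine ⟨Fin.cons g M, fun i => Fin.cases (by simpa using hg) (fun i => by simpa using hrow i) i,
      fun j => ?_⟩
    simp [Fin.prod_univ_succ, hcol, ← hgh]

theorem tauNat_eq_card (k n : ℕ) : tauNat k n = #(Nat.finMulAntidiag k n) := by
  rw [tauNat, ← Nat.card_eq_finsetCard]
  refine Nat.card_congr (Equiv.subtypeEquivRight fun d => ?_)
  rw [Nat.mem_finMulAntidiag]
  constructor
  · rintro ⟨hpos, rfl⟩
    exact ⟨rfl, prod_ne_zero_iff.2 fun i _ => (hpos i).ne'⟩
  · rintro ⟨rfl, h⟩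
    exact ⟨fun i => Nat.pos_of_ne_zero (prod_ne_zero_iff.1 h i (mem_univ _)), rfl⟩

theorem tauNat_mul_tauNat_le (a b n : ℕ) : tauNat a n * tauNat b n ≤ tauNat (a * b) n := by
  simp only [tauNat_eq_card, ← card_product]
  refine card_le_card_of_surjOn (fun f => (fun i => ∏ j, f (finProdFinEquiv (i, j)),
    fun j => ∏ i, f (finProdFinEquiv (i, j)))) ?_
  rintro ⟨d, e⟩ hde
  simp only [coe_product, Set.mem_prod, mem_coe, Nat.mem_finMulAntidiag] at hde
  obtain ⟨⟨hd, hn⟩, he, -⟩ := hde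
  obtain ⟨M, hrow, hcol⟩ := Nat.exists_matrix_prod_eq d e (hd.trans he.symm) (hd ▸ hn)
  refine ⟨fun x => M (finProdFinEquiv.symm x).1 (finProdFinEquiv.symm x).2, ?_, ?_⟩
  · rw [mem_coe, Nat.mem_finMulAntidiag, ← finProdFinEquiv.prod_comp]
    simp [Fintype.prod_prod_type, hrow, hd, hn]
  · simp [hrow, hcol]

theorem tauNat_mul_le (m a b : ℕ) : tauNat m (a * b) ≤ tauNat m a * tauNat m b := by
  simp only [tauNat_eq_card, ← card_product]
  refine card_le_card_of_surjOn (fun p => p.1 * p.2) fun f hf => ?_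
  rw [mem_coe, Nat.mem_finMulAntidiag] at hf
  obtain ⟨g, h, rfl, hg, hh⟩ := Nat.exists_mul_eq_of_prod_eq_mul f hf.1 hf.2
  refine ⟨(g, h), ?_, rfl⟩
  simp only [coe_product, Set.mem_prod, mem_coe, Nat.mem_finMulAntidiag]
  exact ⟨⟨hg, left_ne_zero_of_mul hf.2⟩, hh, right_ne_zero_of_mul hf.2⟩

theorem tauNat_pow_le (m n t : ℕ) : tauNat m (n ^ t) ≤ tauNat m n ^ t := by
  induction t with
  | zero => simp [tauNat_eq_card, Nat.finMulAntidiag_one]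
  | succ t ih =>
    rw [pow_succ, pow_succ]
    exact (tauNat_mul_le m _ n).trans (Nat.mul_le_mul_right _ ih)

theorem tauNat_pow_le_tauNat_pow {n : ℕ} (hn : n ≠ 0) (m t : ℕ) :
    tauNat m n ^ t ≤ tauNat (m ^ t) n := by
  induction t with
  | zero =>
    rw [pow_zero, pow_zero, tauNat_eq_card, Nat.one_le_iff_ne_zero, card_ne_zero]
    exact ⟨fun _ => n, by simp [Nat.mem_finMulAntidiag, hn]⟩
  | succ t ih =>
    rw [pow_succ, pow_succ]
    exact (Nat.mul_le_mul_right _ ih).trans (tauNat_mul_tauNat_le _ m n)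

theorem sum_divisors_tauNat_le (M s : ℕ) :
    ∑ m ∈ s.divisors, tauNat M m ≤ tauNat (M + 1) s := by
  simp only [tauNat_eq_card, ← card_sigma]
  refine card_le_card_of_surjOn (fun f => ⟨∏ i, f (Fin.succ i), Fin.tail f⟩) ?_
  rintro ⟨m, d⟩ hmd
  simp only [coe_sigma, Set.mem_sigma_iff, mem_coe, Nat.mem_divisors, Nat.mem_finMulAntidiag] at hmd
  obtain ⟨⟨⟨c, rfl⟩, hs⟩, rfl, -⟩ := hmd
  refine ⟨Fin.cons c d, ?_, by simp⟩
  simpa [Nat.mem_finMulAntidiag, Fin.prod_univ_succ, mul_comm] using hs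

theorem sum_tauNat_div_le (M N : ℕ) :
    ∑ n ∈ Icc 1 N, (tauNat M n : ℝ) / n ≤ (1 + Real.log N) ^ M := by
  have hterm : ∀ n, (tauNat M n : ℝ) / n = ∑ d ∈ Nat.finMulAntidiag M n, ∏ i, (d i : ℝ)⁻¹ := by
    intro n
    rw [sum_congr rfl fun d hd => by
      rw [prod_inv_distrib, ← Nat.cast_prod, Nat.prod_eq_of_mem_finMulAntidiag hd],
      sum_const, nsmul_eq_mul, tauNat_eq_card, div_eq_mul_inv]
  have hdisj : (Icc 1 N : Set ℕ).PairwiseDisjoint (Nat.finMulAntidiag M) :=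
    fun a _ b _ hab => disjoint_left.2 fun d hda hdb => hab <|
      (Nat.prod_eq_of_mem_finMulAntidiag hda).symm.trans (Nat.prod_eq_of_mem_finMulAntidiag hdb)
  have hsub : (Icc 1 N).biUnion (Nat.finMulAntidiag M) ⊆ Fintype.piFinset fun _ => Icc 1 N := by
    intro d hd
    obtain ⟨n, hn, hdn⟩ := mem_biUnion.1 hd
    refine Fintype.mem_piFinset.2 fun i => mem_Icc.2 ⟨?_, ?_⟩
    · exact Nat.one_le_iff_ne_zero.2 (Nat.ne_zero_of_mem_finMulAntidiag hdn i)
    · exact (Nat.le_of_dvd (mem_Icc.1 hn).1 (Nat.dvd_of_mem_finMulAntidiag hdn i)).trans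
        (mem_Icc.1 hn).2
  have harmonic : ∑ j ∈ Icc 1 N, (j : ℝ)⁻¹ ≤ 1 + Real.log N := by
    simpa [harmonic_eq_sum_Icc] using harmonic_le_one_add_log N
  calc ∑ n ∈ Icc 1 N, (tauNat M n : ℝ) / n
      = ∑ d ∈ (Icc 1 N).biUnion (Nat.finMulAntidiag M), ∏ i, (d i : ℝ)⁻¹ := by
        simp_rw [hterm]; exact (sum_biUnion hdisj).symm
    _ ≤ ∑ d ∈ Fintype.piFinset fun _ => Icc 1 N, ∏ i, (d i : ℝ)⁻¹ :=
        sum_le_sum_of_subset_of_nonneg hsub fun _ _ _ => by positivity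
    _ = (∑ j ∈ Icc 1 N, (j : ℝ)⁻¹) ^ M := by rw [← Fin.prod_const, prod_univ_sum]
    _ ≤ (1 + Real.log N) ^ M := pow_le_pow_left₀ (by positivity) harmonic M

theorem sum_tauNat_le (M N : ℕ) :
    ∑ n ∈ Icc 1 N, (tauNat M n : ℝ) ≤ N * (1 + Real.log N) ^ M := by
  calc ∑ n ∈ Icc 1 N, (tauNat M n : ℝ)
      ≤ ∑ n ∈ Icc 1 N, N * ((tauNat M n : ℝ) / n) := sum_le_sum fun n hn => by
        obtain ⟨hn1, hnN⟩ := mem_Icc.1 hn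
        calc (tauNat M n : ℝ) = n * ((tauNat M n : ℝ) / n) := by field_simp
          _ ≤ N * ((tauNat M n : ℝ) / n) := by gcongr
    _ = N * ∑ n ∈ Icc 1 N, (tauNat M n : ℝ) / n := (mul_sum ..).symm
    _ ≤ N * (1 + Real.log N) ^ M := by gcongr; exact sum_tauNat_div_le M N

theorem radk_zero (k : ℕ) : radk k 0 = 0 := by
  rw [radk, Nat.sInf_eq_zero]
  right
  refine Set.eq_empty_of_forall_notMem fun m hm => ?_
  obtain ⟨d, hpos, hprod, -⟩ := hm
  exact (prod_pos fun i _ => hpos i).ne' hprod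

theorem exists_lcm_eq_radk {k n : ℕ} (hk : k ≠ 0) (hn : n ≠ 0) :
    ∃ d : Fin k → ℕ, (∀ i, 0 < d i) ∧ ∏ i, d i = n ∧ univ.lcm d = radk k n := by
  obtain ⟨k, rfl⟩ := Nat.exists_eq_succ_of_ne_zero hk
  have hS : {m | ∃ d : Fin (k + 1) → ℕ, (∀ i, 0 < d i) ∧ ∏ i, d i = n ∧ univ.lcm d = m}.Nonempty :=
    ⟨_, Fin.cons n 1, fun i => Fin.cases (Nat.pos_of_ne_zero hn) (fun _ => Nat.one_pos) i,
      by simp [Fin.prod_univ_succ], rfl⟩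
  exact Nat.sInf_mem hS

theorem radk_dvd {k : ℕ} (hk : k ≠ 0) (n : ℕ) : radk k n ∣ n := by
  rcases eq_or_ne n 0 with rfl | hn
  · exact dvd_zero _
  obtain ⟨d, -, hprod, hlcm⟩ := exists_lcm_eq_radk hk hn
  exact hlcm ▸ hprod ▸ lcm_dvd_prod _ _

theorem dvd_radk_pow {k : ℕ} (hk : k ≠ 0) (n : ℕ) : n ∣ radk k n ^ k := by
  rcases eq_or_ne n 0 with rfl | hn
  · rw [radk_zero, zero_pow hk]
  obtain ⟨d, -, hprod, hlcm⟩ := exists_lcm_eq_radk hk hn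
  rw [← hlcm, ← hprod, ← Fin.prod_const]
  exact prod_dvd_prod_of_dvd _ _ fun i _ => dvd_lcm (mem_univ i)

theorem sum_tauNat_filter_radk_eq_le {k r : ℕ} (hk : k ≠ 0) (hr : r ≠ 0) (M : ℕ)
    (s : Finset ℕ) :
    ∑ n ∈ s with radk k n = r, tauNat M n ≤ tauNat (M * (M + 1) ^ (k - 1)) r := by
  have hsub : {n ∈ s | radk k n = r} ⊆ (r ^ (k - 1)).divisors.image (r * ·) := by
    intro n hn
    have hrad := (mem_filter.1 hn).2
    obtain ⟨m, rfl⟩ : r ∣ n := hrad ▸ radk_dvd hk n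
    have hdvd : r * m ∣ r * r ^ (k - 1) := by
      have h := dvd_radk_pow hk (r * m)
      rwa [hrad, ← Nat.sub_add_cancel (Nat.one_le_iff_ne_zero.2 hk), pow_succ'] at h
    exact mem_image.2 ⟨m, Nat.mem_divisors.2
      ⟨Nat.dvd_of_mul_dvd_mul_left (Nat.pos_of_ne_zero hr) hdvd, pow_ne_zero _ hr⟩, rfl⟩
  calc ∑ n ∈ s with radk k n = r, tauNat M n
      ≤ ∑ n ∈ (r ^ (k - 1)).divisors.image (r * ·), tauNat M n := sum_le_sum_of_subset hsub
    _ = ∑ m ∈ (r ^ (k - 1)).divisors, tauNat M (r * m) :=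
        sum_image fun _ _ _ _ h => Nat.eq_of_mul_eq_mul_left (Nat.pos_of_ne_zero hr) h
    _ ≤ ∑ m ∈ (r ^ (k - 1)).divisors, tauNat M r * tauNat M m :=
        sum_le_sum fun m _ => tauNat_mul_le M r m
    _ = tauNat M r * ∑ m ∈ (r ^ (k - 1)).divisors, tauNat M m := (mul_sum ..).symm
    _ ≤ tauNat M r * tauNat (M + 1) r ^ (k - 1) := by
        gcongr
        exact (sum_divisors_tauNat_le M _).trans (tauNat_pow_le _ _ _)
    _ ≤ tauNat M r * tauNat ((M + 1) ^ (k - 1)) r := by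
        gcongr
        exact tauNat_pow_le_tauNat_pow hr _ _
    _ ≤ tauNat (M * (M + 1) ^ (k - 1)) r := tauNat_mul_tauNat_le _ _ _

theorem sum_tauNat_div_radk_le {k : ℕ} (hk : k ≠ 0) (M N : ℕ) :
    ∑ n ∈ Icc 1 N, (tauNat M n : ℝ) / radk k n ≤ (1 + Real.log N) ^ (M * (M + 1) ^ (k - 1)) := by
  have hmaps : ∀ n ∈ Icc 1 N, radk k n ∈ Icc 1 N := by
    intro n hn
    obtain ⟨hn1, hnN⟩ := mem_Icc.1 hn
    have hdvd := radk_dvd hk n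
    exact mem_Icc.2 ⟨Nat.pos_of_dvd_of_pos hdvd hn1, (Nat.le_of_dvd hn1 hdvd).trans hnN⟩
  rw [← sum_fiberwise_of_maps_to hmaps]
  refine (sum_le_sum fun r hr => ?_).trans (sum_tauNat_div_le _ N)
  rw [sum_congr rfl fun n hn => by rw [(mem_filter.1 hn).2], ← sum_div]
  gcongr
  exact_mod_cast sum_tauNat_filter_radk_eq_le hk (Nat.one_le_iff_ne_zero.1 (mem_Icc.1 hr).1) M _

theorem sum_tauNat_mul_one_add_div_radk_le {k : ℕ} (hk : k ≠ 0) (M X N : ℕ) :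
    ∑ n ∈ Icc 1 N, (tauNat M n : ℝ) * (1 + X / radk k n)
      ≤ (N + X) * (1 + Real.log N) ^ (M * (M + 1) ^ (k - 1)) := by
  have hlog : 1 ≤ 1 + Real.log N := le_add_of_nonneg_right (Real.log_natCast_nonneg N)
  have hexp : M ≤ M * (M + 1) ^ (k - 1) := Nat.le_mul_of_pos_right M (by positivity)
  calc ∑ n ∈ Icc 1 N, (tauNat M n : ℝ) * (1 + X / radk k n)
      = ∑ n ∈ Icc 1 N, (tauNat M n : ℝ) + X * ∑ n ∈ Icc 1 N, (tauNat M n : ℝ) / radk k n := by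
        rw [mul_sum, ← sum_add_distrib]
        exact sum_congr rfl fun n _ => by ring
    _ ≤ N * (1 + Real.log N) ^ M + X * (1 + Real.log N) ^ (M * (M + 1) ^ (k - 1)) := by
        gcongr
        · exact sum_tauNat_le M N
        · exact sum_tauNat_div_radk_le hk M N
    _ ≤ N * (1 + Real.log N) ^ (M * (M + 1) ^ (k - 1))
          + X * (1 + Real.log N) ^ (M * (M + 1) ^ (k - 1)) := by
        gcongr
    _ = (N + X) * (1 + Real.log N) ^ (M * (M + 1) ^ (k - 1)) := by ring

theorem tauNat_weight_le {n : ℕ} (hn : n ≠ 0) (k : ℕ) :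
    tauNat (2 * k) n ^ (2 * k) * tauNat 2 n * tauNat k n ^ 2
      ≤ tauNat ((2 * k) ^ (2 * k) * 2 * k ^ 2) n :=
  calc tauNat (2 * k) n ^ (2 * k) * tauNat 2 n * tauNat k n ^ 2
      ≤ tauNat ((2 * k) ^ (2 * k)) n * tauNat 2 n * tauNat (k ^ 2) n := by
        gcongr <;> exact tauNat_pow_le_tauNat_pow hn _ _
    _ ≤ tauNat ((2 * k) ^ (2 * k) * 2) n * tauNat (k ^ 2) n := by
        gcongr
        exact tauNat_mul_tauNat_le _ _ _
    _ ≤ tauNat ((2 * k) ^ (2 * k) * 2 * k ^ 2) n := tauNat_mul_tauNat_le _ _ _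

theorem Real.one_add_log_two_mul_le {x : ℝ} (hx : 6 ≤ x) : 1 + log (2 * x) ≤ 2 * log x := by
  have h := log_le_log (by positivity) ((mul_le_mul_of_nonneg_right exp_one_lt_d9.le
    zero_le_two).trans (by linarith) : exp 1 * 2 ≤ x)
  rw [log_mul (exp_pos 1).ne' two_ne_zero, log_exp] at h
  rw [log_mul two_ne_zero (by positivity)]
  linarith

theorem sum_Icc_sum_Ioc_le {g : ℕ → ℝ} (hg : ∀ y, 0 ≤ g y) {X H N : ℕ} (hN : X + H ≤ N) :
    ∑ x ∈ Icc 1 X, ∑ y ∈ Ioc x (x + H), g y ≤ H * ∑ y ∈ Icc 1 N, g y := by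
  rw [sum_comm' (t' := Icc 1 N) (s' := fun y => Ico (y - H) y ∩ Icc 1 X) (by
    intro x y; simp only [mem_Icc, mem_Ioc, mem_inter, mem_Ico]; omega), mul_sum]
  refine sum_le_sum fun y _ => ?_
  rw [sum_const, nsmul_eq_mul]
  gcongr
  · exact hg y
  · exact_mod_cast (card_le_card inter_subset_left).trans (by rw [Nat.card_Ico]; omega)

/-- for every `k ≥ 1` there are constants `𝒞_k > 0`, `C > 0` and a
threshold `X₀` such that for all integers `X ≥ X₀` and `1 ≤ H ≤ X`:
`(1/X) ∑_{x=1}^{X} ∑_{y=x+1}^{x+H} τ_{2k}(y)^{2k}·τ₂(y)·τ_k(y)²·(1 + X/rad_k(y))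
  ≤ C · H · (log X)^{𝒞_k}`. -/
theorem stmt16 (k : ℕ) (hk : 1 ≤ k) :
    ∃ Ck : ℕ, 0 < Ck ∧ ∃ C : ℝ, 0 < C ∧ ∃ X₀ : ℕ, ∀ X H : ℕ, X₀ ≤ X → 1 ≤ H → H ≤ X →
      (1 / (X : ℝ)) * ∑ x ∈ Finset.Icc 1 X, ∑ y ∈ Finset.Ioc x (x + H),
          (tauNat (2 * k) y : ℝ) ^ (2 * k) * (tauNat 2 y : ℝ) * (tauNat k y : ℝ) ^ 2 *
            (1 + (X : ℝ) / (radk k y : ℝ))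
        ≤ C * (H : ℝ) * Real.log X ^ Ck := by
  set M := (2 * k) ^ (2 * k) * 2 * k ^ 2
  set Ck := M * (M + 1) ^ (k - 1)
  refine ⟨Ck, by positivity, 3 * 2 ^ Ck, by positivity, 6, fun X H hX _ hHX => ?_⟩
  have hX0 : (0 : ℝ) < X := by positivity
  have hweight : ∀ y ∈ Icc 1 (2 * X),
      (tauNat (2 * k) y : ℝ) ^ (2 * k) * (tauNat 2 y : ℝ) * (tauNat k y : ℝ) ^ 2 *
        (1 + (X : ℝ) / (radk k y : ℝ)) ≤ (tauNat M y : ℝ) * (1 + X / radk k y) := by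
    intro y hy
    gcongr
    exact_mod_cast tauNat_weight_le (Nat.one_le_iff_ne_zero.1 (mem_Icc.1 hy).1) k
  calc _ ≤ 1 / X * (H * ((2 * X + X) * (1 + Real.log (2 * X)) ^ Ck)) := by
        gcongr
        refine (sum_Icc_sum_Ioc_le (fun y => by positivity) (by omega : X + H ≤ 2 * X)).trans ?_
        gcongr
        exact_mod_cast (sum_le_sum hweight).trans
          (sum_tauNat_mul_one_add_div_radk_le (by omega) M X (2 * X))
    _ = 3 * H * (1 + Real.log (2 * X)) ^ Ck := by field_simp; ring
    _ ≤ 3 * H * (2 * Real.log X) ^ Ck := by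
        gcongr
        · linarith [Real.log_nonneg (by norm_cast; omega : (1 : ℝ) ≤ 2 * X)]
        · exact Real.one_add_log_two_mul_le (by exact_mod_cast hX)
    _ = 3 * 2 ^ Ck * H * Real.log X ^ Ck := by ring
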